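/- Let s ∈ ℂ and define ι : ℂ⁵ → ℂ⁵ by ι(x) = (f4 + (s²/2)f2 − (1/16)f0, (s/4)f1 + s·f3, s²·f2, s·f1, f0), where fᵢ are evaluated at x. Let p : ℂ⁴ → ℂ⁵ be p(x0,x2,x3,x4) = (x0x3, s²x0x4 − s²x2² + x2² − (1/4)x2x4 + (1/4)x3², x2x3, x3², x3x4). Then ι(ι(p(x0,x2,x3,x4))) is a scalar multiple (by a polynomial factor) of p(x0,x2,x3,x4) for all (x0,x2,x3,x4) ∈ ℂ⁴. Hence ι induces a birational involution of the quadric Q = {(1−4s²)f2 + f5 = 0} ⊂ P⁴. -/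

import Mathlib

/-- ι : ℂ⁵ → ℂ⁵ from Case (2) of Theorem 3.1. -/
noncomputable def iotaMap (s : ℂ) (x : Fin 5 → ℂ) : Fin 5 → ℂ :=
  ![ ((x 1)^2 - (x 0)*(x 2)) + (s^2/2) * ((x 2)^2 - (x 0)*(x 4))
       - (1/16) * ((x 3)^2 - (x 2)*(x 4)),
     (s/4) * ((x 2)*(x 3) - (x 1)*(x 4)) + s * ((x 1)*(x 2) - (x 0)*(x 3)),
     s^2 * ((x 2)^2 - (x 0)*(x 4)),
     s * ((x 2)*(x 3) - (x 1)*(x 4)),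
     (x 3)^2 - (x 2)*(x 4) ]

/-- The rational parametrization p of the quadric. -/
noncomputable def pMap (s : ℂ) (x0 x2 x3 x4 : ℂ) : Fin 5 → ℂ :=
  ![ x0*x3,
     s^2*x0*x4 - s^2*x2^2 + x2^2 - (1/4)*x2*x4 + (1/4)*x3^2,
     x2*x3,
     x3^2,
     x3*x4 ]


/-!
The image of `pMap` lies on a quadric `q = 0`, and on that quadric `ι ∘ ι` is multiplication by
a cubic form `λ`: each coordinate of `ι (ι y) - λ(y) • y` is `q(y)` times an explicit quadratic
form, which are the coefficients of the `linear_combination`s below.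
-/

/-- In the paper's notation, `(1 - 4 s²) f₂ + f₅ + f₀`. -/
noncomputable def quadric (s : ℂ) (y : Fin 5 → ℂ) : ℂ :=
  (1 - 4 * s ^ 2) * (y 2 ^ 2 - y 0 * y 4) + (3 * y 2 ^ 2 - 4 * y 1 * y 3 + y 0 * y 4)
    + (y 3 ^ 2 - y 2 * y 4)

noncomputable def iotaSqFactor (s : ℂ) (y : Fin 5 → ℂ) : ℂ :=
  s ^ 2 * ((y 0 - y 2 / 2) * (y 3 ^ 2 - y 2 * y 4) + (2 * s ^ 2 - 1) * y 2 * (y 2 ^ 2 - y 0 * y 4)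
    + y 4 * (y 1 ^ 2 - y 0 * y 2))

theorem quadric_pMap (s x0 x2 x3 x4 : ℂ) : quadric s (pMap s x0 x2 x3 x4) = 0 := by
  simp only [quadric, pMap, Matrix.cons_val]
  ring

theorem iotaMap_iotaMap_of_quadric_eq_zero {s : ℂ} {y : Fin 5 → ℂ} (hy : quadric s y = 0) :
    iotaMap s (iotaMap s y) = iotaSqFactor s y • y := by
  unfold quadric at hy
  funext i
  fin_cases i <;>
    simp only [iotaMap, iotaSqFactor, Matrix.cons_val, Matrix.cons_val_zero, Matrix.cons_val_one,
      Fin.zero_eta, Fin.mk_one, Fin.reduceFinMk, Pi.smul_apply, smul_eq_mul]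
  · linear_combination s ^ 2 / 8 * (s ^ 2 * y 0 * y 4 - s ^ 2 * y 2 ^ 2 + 4 * y 0 * y 2 - y 0 * y 4
      + y 1 * y 3 - (y 2 * y 4 - y 3 ^ 2) / 4) * hy
  · linear_combination s ^ 2 / 4 * (y 0 * y 3 + y 1 * y 2) * hy
  · linear_combination s ^ 2 / 4 * (s ^ 2 * y 0 * y 4 - s ^ 2 * y 2 ^ 2 + y 1 * y 3 + y 2 ^ 2
      - (y 2 * y 4 - y 3 ^ 2) / 4) * hy
  · linear_combination s ^ 2 / 4 * (y 1 * y 4 + y 2 * y 3) * hy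
  · linear_combination s ^ 2 / 2 * y 2 * y 4 * hy

theorem iota_involution (s : ℂ) (x0 x2 x3 x4 : ℂ) :
    ∃ c : ℂ, iotaMap s (iotaMap s (pMap s x0 x2 x3 x4)) = c • pMap s x0 x2 x3 x4 :=
  ⟨iotaSqFactor s (pMap s x0 x2 x3 x4),
    iotaMap_iotaMap_of_quadric_eq_zero (quadric_pMap s x0 x2 x3 x4)⟩
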